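/- arXiv:1802.04482 — 2 statements merged into one kernel-verified Lean document; each statement's English description precedes it below -/
import Mathlib

section
/- Let E be a field containing 𝔽_q, σ the q-power Frobenius on E, V a finite-dimensional 𝔽_q-vector space, W ⊆ V a subspace, and τ = id ⊗ σ the semilinear endomorphism of V ⊗ E (and of (V/W) ⊗ E), with τ*M denoting the E-span of τ(M). Let J' ⊆ V/W be a line and let 𝔍 = {lines J ⊆ V whose image in V/W equals J'}. Suppose L ⊆ V ⊗ E is a finite-dimensional toy shtuka (dim L − dim(L ∩ τ*L) ≤ 1) such that: L ∩ (W ⊗ E) = 0; the image L''' of L in (V/W) ⊗ E satisfies τ*L''' ≠ L'''; and L''' ⊇ J' ⊗ E. Then there exists J ∈ 𝔍 with J ⊗ E ⊆ L. -/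
/-!
Write `π : V ⊗ E → (V/W) ⊗ E` for the projection and `L₃ = π L` (the paper's `L'''`). Since
`L ∩ (W ⊗ E) = 0`, `π` is injective on `L`, and by a dimension count also on `τ*L`, because `τ*`
preserves dimensions and commutes with `π`. The toy shtuka condition makes `L ∩ τ*L` of
codimension at most one in `L`, while `τ*L₃ ≠ L₃` makes `L₃ ∩ τ*L₃` of codimension at least one
in `L₃`; as `π (L ∩ τ*L) ⊆ L₃ ∩ τ*L₃`, the two are equal. So for `j` spanning `J'`, the
`τ`-fixed vector `1 ⊗ j ∈ L₃` is `π x` for some `x ∈ L ∩ τ*L`. Then `τ x ∈ τ*L` and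
`π (τ x) = τ (1 ⊗ j) = π x`, hence `τ x = x`. The coordinates `c` of `x` satisfy `c ^ q = c`, so
they lie in `𝔽_q` and `x = 1 ⊗ u`; the line `J = 𝔽_q u` works.

That `τ*` preserves dimension is seen on matrices: if `N` is the column space of `M`, then `τ*N`
is the column space of `σ` applied entrywise to `M`, and a field homomorphism preserves the rank,
since it fixes the rank normal form.
-/

open TensorProduct Module

theorem Submodule.finrank_map_eq_of_disjoint_ker {R M N : Type*} [Field R] [AddCommGroup M]
    [Module R M] [AddCommGroup N] [Module R N] (f : M →ₗ[R] N) {p : Submodule R M}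
    (h : Disjoint p (LinearMap.ker f)) : finrank R (p.map f) = finrank R p := by
  rw [← LinearMap.range_domRestrict]
  exact LinearMap.finrank_range_of_inj (LinearMap.injective_domRestrict_iff.mpr h)

theorem one_tmul_injective {R A M : Type*} [CommRing R] [Ring A] [Algebra R A] [AddCommGroup M]
    [Module R M] [Module.Flat R M] (hA : Function.Injective (algebraMap R A)) :
    Function.Injective fun m : M => (1 : A) ⊗ₜ[R] m := by
  have := (Module.Flat.rTensor_preserves_injective_linearMap (M := M) (Algebra.linearMap R A)
    hA).comp (TensorProduct.lid R M).symm.injective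
  convert this using 1
  ext m
  simp

theorem Submodule.ker_baseChange_mkQ {R A M : Type*} [CommRing R] [CommRing A] [Algebra R A]
    [Module.Flat R A] [AddCommGroup M] [Module R M] (W : Submodule R M) :
    LinearMap.ker (W.mkQ.baseChange A) = W.baseChange A := by
  ext x
  have := Module.Flat.lTensor_exact A (LinearMap.exact_subtype_mkQ W) x
  simpa [LinearMap.baseChange_eq_ltensor, Submodule.baseChange] using this

open Polynomial in
theorem FiniteField.mem_range_algebraMap_of_pow_card_eq_self {F E : Type*} [Field F] [Fintype F]
    [Field E] [Algebra F E] {c : E} (hc : c ^ Fintype.card F = c) :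
    c ∈ (algebraMap F E).range := by
  have hq := Fintype.one_lt_card (α := F)
  have hmonic : (X ^ Fintype.card F - X : F[X]).Monic := monic_X_pow_sub (by simpa using hq)
  have hroots := hmonic.roots_map_of_card_eq_natDegree (algebraMap F E)
    (by rw [roots_X_pow_card_sub_X, X_pow_card_sub_X_natDegree_eq F hq]; rfl)
  have hroot : c ∈ ((X ^ Fintype.card F - X : F[X]).map (algebraMap F E)).roots := by
    rw [Polynomial.map_sub, Polynomial.map_pow, map_X,
      mem_roots (X_pow_card_sub_X_ne_zero E hq)]
    simp [hc]
  rw [← hroots, roots_X_pow_card_sub_X, Multiset.mem_map] at hroot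
  obtain ⟨d, -, rfl⟩ := hroot
  exact ⟨d, rfl⟩

namespace Matrix

variable {K L : Type*} [Field K] [Field L] {m : Type*} [Fintype m] [DecidableEq m]

theorem rank_fromBlocks_one_submatrix {r s : ℕ} (e : m ≃ Fin r ⊕ Fin s) :
    ((fromBlocks (1 : Matrix (Fin r) (Fin r) K) 0 0 0).submatrix e e).rank = r := by
  classical
  rw [← diagonal_one, ← diagonal_zero, fromBlocks_diagonal, submatrix_diagonal_equiv,
    rank_diagonal]
  refine (Fintype.card_congr ((e.subtypeEquiv fun i => ?_).trans Equiv.sumIsLeft)).trans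
    (Fintype.card_fin r)
  simp only [Function.comp_apply]
  rcases e i with a | b <;> simp

theorem rank_map_ringHom (f : K →+* L) (A : Matrix m m K) : (A.map f).rank = A.rank := by
  obtain ⟨P, Q, e, hP, hQ, hPAQ⟩ := A.exists_rank_normal_form
  -- the normal form `fromBlocks 1 0 0 0` has entries `0` and `1`, so `f` fixes it
  have hmap : P.map f * A.map f * Q.map f = (fromBlocks 1 0 0 0).submatrix e e := by
    have := congrArg (fun M => M.map f) hPAQ
    simpa [Matrix.map_mul, ← submatrix_map, fromBlocks_map] using this
  have hunit (U : Matrix m m K) (hU : IsUnit U) : IsUnit (U.map f).det := by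
    rw [← RingHom.mapMatrix_apply, ← RingHom.map_det]
    exact ((isUnit_iff_isUnit_det U).mp hU).map f
  rw [← rank_mul_eq_left_of_isUnit_det _ _ (hunit Q hQ),
    ← rank_mul_eq_right_of_isUnit_det _ _ (hunit P hP), ← mul_assoc, hmap,
    rank_fromBlocks_one_submatrix]

end Matrix

theorem Submodule.exists_range_mulVecLin_eq {K m : Type*} [Field K] [Fintype m] [DecidableEq m]
    (P : Submodule K (m → K)) : ∃ A : Matrix m m K, LinearMap.range A.mulVecLin = P := by
  obtain ⟨q, hq⟩ := P.exists_isCompl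
  refine ⟨LinearMap.toMatrix' (P.subtype ∘ₗ P.projectionOnto q hq), ?_⟩
  rw [← Matrix.toLin'_apply', Matrix.toLin'_toMatrix', LinearMap.range_comp,
    range_projectionOnto, Submodule.map_top, Submodule.range_subtype]

theorem Matrix.span_image_range_mulVecLin {K L m : Type*} [Field K] [Field L] [Fintype m]
    [DecidableEq m] (f : K →+* L) (A : Matrix m m K) :
    Submodule.span L ((f ∘ ·) '' LinearMap.range A.mulVecLin) =
      LinearMap.range (A.map f).mulVecLin := by
  apply le_antisymm
  · rw [Submodule.span_le]
    rintro _ ⟨_, ⟨v, rfl⟩, rfl⟩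
    exact ⟨f ∘ v, funext fun i => (RingHom.map_mulVec f A v i).symm⟩
  · rw [Matrix.range_mulVecLin]
    refine Submodule.span_mono ?_
    rintro _ ⟨j, rfl⟩
    exact ⟨A.col j, ⟨Pi.single j 1, Matrix.mulVec_single_one A j⟩, rfl⟩

theorem finrank_span_image_comp_ringHom {K L m : Type*} [Field K] [Field L] [Fintype m]
    [DecidableEq m] (f : K →+* L) (P : Submodule K (m → K)) :
    finrank L (Submodule.span L ((f ∘ ·) '' (P : Set (m → K)))) = finrank K P := by
  obtain ⟨A, rfl⟩ := P.exists_range_mulVecLin_eq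
  rw [A.span_image_range_mulVecLin f]
  exact A.rank_map_ringHom f

section Twist

variable {F K K' X Y : Type*} [Field F] [Field K] [Field K'] [Algebra F K] [Algebra F K']
  [AddCommGroup X] [Module F X] [AddCommGroup Y] [Module F Y]

/-- The paper's `τ*N`, for `τ = φ ⊗ id`. -/
def Submodule.twist (N : Submodule K (K ⊗[F] X)) (φ : K →ₐ[F] K') :
    Submodule K' (K' ⊗[F] X) :=
  Submodule.span K' (LinearMap.rTensor X φ.toLinearMap '' N)

theorem Module.Basis.baseChange_repr_rTensor {ι : Type*} (b : Basis ι F X) (φ : K →ₐ[F] K')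
    (x : K ⊗[F] X) (i : ι) :
    (b.baseChange K').repr (LinearMap.rTensor X φ.toLinearMap x) i =
      φ ((b.baseChange K).repr x i) := by
  induction x using TensorProduct.induction_on with
  | zero => simp
  | tmul a v => simp
  | add x y hx hy => simp [hx, hy]

theorem Submodule.finrank_twist [FiniteDimensional F X] (N : Submodule K (K ⊗[F] X))
    (φ : K →ₐ[F] K') : finrank K' (N.twist φ) = finrank K N := by
  classical
  let b := Module.finBasis F X
  let e := (b.baseChange K).equivFun
  let e' := (b.baseChange K').equivFun
  have hτ : ⇑(LinearMap.rTensor X φ.toLinearMap) = e'.symm ∘ (φ ∘ ·) ∘ e := by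
    ext x : 1
    rw [Function.comp_apply, Function.comp_apply, LinearEquiv.eq_symm_apply]
    funext i
    simp [e, e', b.baseChange_repr_rTensor]
  rw [twist, hτ, Set.image_comp, Set.image_comp, Submodule.span_image_linearEquiv,
    LinearEquiv.finrank_map_eq, ← e.finrank_map_eq N,
    ← finrank_span_image_comp_ringHom (φ : K →+* K')]
  rfl

theorem LinearMap.baseChange_rTensor_comm (g : X →ₗ[F] Y) (φ : K →ₐ[F] K') (x : K ⊗[F] X) :
    g.baseChange K' (LinearMap.rTensor X φ.toLinearMap x) =
      LinearMap.rTensor Y φ.toLinearMap (g.baseChange K x) := by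
  induction x using TensorProduct.induction_on with
  | zero => simp
  | tmul a v => simp
  | add x y hx hy => simp [hx, hy]

theorem Submodule.map_baseChange_twist (g : X →ₗ[F] Y) (N : Submodule K (K ⊗[F] X))
    (φ : K →ₐ[F] K') :
    (N.twist φ).map (g.baseChange K') = (N.map (g.baseChange K)).twist φ := by
  rw [twist, twist, Submodule.map_span, Submodule.map_coe, ← Set.image_comp, ← Set.image_comp]
  congr 1
  exact Set.image_congr fun x _ => g.baseChange_rTensor_comm φ x

end Twist

theorem exists_eq_one_tmul_of_rTensor_eq_self {F E X : Type*} [Field F] [Fintype F] [Field E]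
    [Algebra F E] [AddCommGroup X] [Module F X] [FiniteDimensional F X] {φ : E →ₐ[F] E}
    (hφ : ∀ c, φ c = c ^ Fintype.card F) {x : E ⊗[F] X}
    (hx : LinearMap.rTensor X φ.toLinearMap x = x) : ∃ u : X, x = 1 ⊗ₜ u := by
  let b := Module.finBasis F X
  have hfix (i) : (b.baseChange E).repr x i ∈ (algebraMap F E).range :=
    FiniteField.mem_range_algebraMap_of_pow_card_eq_self
      (by rw [← hφ, ← b.baseChange_repr_rTensor, hx])
  choose d hd using hfix
  refine ⟨b.equivFun.symm d, (b.baseChange E).ext_elem fun i => ?_⟩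
  rw [Basis.baseChange_repr_tmul, ← b.equivFun_apply, LinearEquiv.apply_symm_apply, ← hd,
    Algebra.algebraMap_eq_smul_one]

section Transversal

variable {F E X Y : Type*} [Field F] [Field E] [Algebra F E]
  [AddCommGroup X] [Module F X] [FiniteDimensional F X]
  [AddCommGroup Y] [Module F Y] [FiniteDimensional F Y]
  {φ : E →ₐ[F] E} {g : X →ₗ[F] Y} {L : Submodule E (E ⊗[F] X)}

theorem Submodule.disjoint_twist_ker_baseChange
    (hL : Disjoint L (LinearMap.ker (g.baseChange E))) :
    Disjoint (L.twist φ) (LinearMap.ker (g.baseChange E)) := by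
  refine Submodule.disjoint_ker_of_finrank_le _ (le_of_eq ?_)
  rw [map_baseChange_twist, finrank_twist, finrank_twist, finrank_map_eq_of_disjoint_ker _ hL]

theorem Submodule.map_inf_twist_eq (hL : Disjoint L (LinearMap.ker (g.baseChange E)))
    (hshtuka : finrank E L - finrank E ↥(L ⊓ L.twist φ) ≤ 1)
    (hnt : (L.map (g.baseChange E)).twist φ ≠ L.map (g.baseChange E)) :
    (L ⊓ L.twist φ).map (g.baseChange E) =
      L.map (g.baseChange E) ⊓ (L.map (g.baseChange E)).twist φ := by
  set L₃ := L.map (g.baseChange E)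
  have hL₃ : finrank E L₃ = finrank E L := finrank_map_eq_of_disjoint_ker _ hL
  have hlt : finrank E ↥(L₃ ⊓ L₃.twist φ) < finrank E L := by
    refine hL₃ ▸ Submodule.finrank_lt_finrank_of_lt (inf_le_left.lt_of_ne fun h => hnt ?_)
    exact (eq_of_le_of_finrank_le (inf_eq_left.mp h) (by rw [finrank_twist])).symm
  have hle : (L ⊓ L.twist φ).map (g.baseChange E) ≤ L₃ ⊓ L₃.twist φ :=
    (map_inf_le _).trans_eq (by rw [map_baseChange_twist])
  refine eq_of_le_of_finrank_le hle ?_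
  rw [finrank_map_eq_of_disjoint_ker _ (hL.mono_left inf_le_left)]
  have := finrank_mono (inf_le_left : L ⊓ L.twist φ ≤ L)
  omega

theorem Submodule.exists_fixed_mem_of_fixed_mem_map
    (hL : Disjoint L (LinearMap.ker (g.baseChange E)))
    (hshtuka : finrank E L - finrank E ↥(L ⊓ L.twist φ) ≤ 1)
    (hnt : (L.map (g.baseChange E)).twist φ ≠ L.map (g.baseChange E))
    {y : E ⊗[F] Y} (hy : y ∈ L.map (g.baseChange E))
    (hyfix : LinearMap.rTensor Y φ.toLinearMap y = y) :
    ∃ x ∈ L, LinearMap.rTensor X φ.toLinearMap x = x ∧ g.baseChange E x = y := by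
  have hyM : y ∈ (L ⊓ L.twist φ).map (g.baseChange E) := by
    rw [map_inf_twist_eq hL hshtuka hnt]
    exact ⟨hy, hyfix ▸ subset_span ⟨y, hy, rfl⟩⟩
  obtain ⟨x, ⟨hxL, hxτ⟩, rfl⟩ := hyM
  -- `x` and `τ x` both lie in `τ*L`, on which `π` is injective, and `π (τ x) = τ (π x) = π x`
  refine ⟨x, hxL, LinearMap.injOn_of_disjoint_ker le_rfl (disjoint_twist_ker_baseChange hL)
    (subset_span ⟨x, hxL, rfl⟩) hxτ ?_, rfl⟩
  rw [g.baseChange_rTensor_comm, hyfix]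

end Transversal

/-- If a toy shtuka `L` meets `W ⊗ E` trivially, induces a nontrivial toy shtuka on
`(V/W) ⊗ E`, and its image contains `J' ⊗ E` for a line `J' ⊆ V/W`, then `L` contains
`J ⊗ E` for some line `J ⊆ V` lifting `J'`. -/
theorem toy_shtuka_contains_line_lift
    {F E : Type*} [Field F] [Fintype F] [Field E] [Algebra F E]
    {V : Type*} [AddCommGroup V] [Module F V] [FiniteDimensional F V]
    (σ : E →ₗ[F] E) (hσ : ∀ x : E, σ x = x ^ Fintype.card F)
    (W : Submodule F V) (J' : Submodule F (V ⧸ W)) (hJ' : finrank F ↥J' = 1)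
    (L : Submodule E (E ⊗[F] V))
    (hL : finrank E ↥L -
        finrank E ↥(L ⊓ Submodule.span E
          (⇑(LinearMap.rTensor V σ) '' (L : Set (E ⊗[F] V)))) ≤ 1)
    (hzero : L ⊓ Submodule.span E ((fun v => (1 : E) ⊗ₜ[F] v) '' (W : Set V)) = ⊥)
    (hnt : Submodule.span E (⇑(LinearMap.rTensor (V ⧸ W) σ) ''
        ((Submodule.map ((W.mkQ).baseChange E) L) : Set (E ⊗[F] (V ⧸ W))))
      ≠ Submodule.map ((W.mkQ).baseChange E) L)
    (hcontain : Submodule.span E ((fun x => (1 : E) ⊗ₜ[F] x) '' (J' : Set (V ⧸ W)))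
      ≤ Submodule.map ((W.mkQ).baseChange E) L) :
    ∃ J : Submodule F V, finrank F ↥J = 1 ∧ Submodule.map W.mkQ J = J' ∧
      Submodule.span E ((fun v => (1 : E) ⊗ₜ[F] v) '' (J : Set V)) ≤ L := by
  obtain ⟨φ, rfl⟩ : ∃ φ : E →ₐ[F] E, φ.toLinearMap = σ :=
    ⟨AlgHom.ofLinearMap σ (by simp [hσ]) (by simp [hσ, mul_pow]),
      AlgHom.toLinearMap_ofLinearMap ..⟩
  have hdisj : Disjoint L (LinearMap.ker (W.mkQ.baseChange E)) := by
    rw [Submodule.ker_baseChange_mkQ, Submodule.baseChange_eq_span, disjoint_iff]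
    exact hzero
  obtain ⟨j, hjJ', hj⟩ := Submodule.exists_mem_ne_zero_of_ne_bot
    (fun h => by subst h; simp at hJ' : J' ≠ ⊥)
  obtain ⟨x, hxL, hxfix, hπx⟩ := Submodule.exists_fixed_mem_of_fixed_mem_map hdisj hL hnt
    (hcontain (Submodule.subset_span ⟨j, hjJ', rfl⟩)) (by simp)
  obtain ⟨u, rfl⟩ := exists_eq_one_tmul_of_rTensor_eq_self hσ hxfix
  have hu : W.mkQ u = j :=
    one_tmul_injective (A := E) (algebraMap F E).injective (by simpa using hπx)
  have hu0 : u ≠ 0 := fun h => hj (by rw [← hu, h, map_zero])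
  refine ⟨Submodule.span F {u}, finrank_span_singleton hu0, ?_, ?_⟩
  · rw [Submodule.map_span, Set.image_singleton, hu,
      eq_span_singleton_of_mem_of_finrank_eq_one hJ' hjJ' hj]
  · change Submodule.span E (TensorProduct.mk F E V 1 '' _) ≤ L
    rw [← Submodule.map_coe, ← Submodule.baseChange_eq_span, Submodule.baseChange_span,
      Submodule.span_le, Set.image_singleton, Set.singleton_subset_iff]
    exact hxL
end

section
/- Let E be a field containing 𝔽_q, σ the q-power Frobenius, V an 𝔽_q-vector space of dimension N ≥ 3, and 1 ≤ n ≤ N−1. Let τ = id ⊗ σ on V ⊗ E, with τ*L the E-span of τ(L). Let W ⊆ V be a subspace of codimension n, and let L ⊆ V ⊗ E be an n-dimensional toy shtuka (dim L − dim(L ∩ τ*L) ≤ 1) with τ*L ≠ L. If the natural map L → (V/W) ⊗ E is not an isomorphism, then either there exists a hyperplane H ⊆ V with H ⊇ W and L ⊆ H ⊗ E, or there exists a line J ⊆ V with J ⊆ W and J ⊗ E ⊆ L. -/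
/-!
A subspace of `V ⊗ E` stable under `τ = σ ⊗ id` is the base change of a subspace of `V`: a
nonzero stable subspace contains a vector of minimal support in a basis of `V`; normalised to have
a coordinate `1`, it is fixed by `τ`, so its coordinates are `σ`-fixed and lie in `F`.

Let `K = L ∩ (W ⊗ E)` and `M` be the kernel and the image of `L → (V/W) ⊗ E`; since
`dim L = dim (V/W)`, `K ≠ 0` and `M` is proper. If `τ K ⊆ L`, then `K` is `τ`-stable, so it
contains `J ⊗ E` for a line `J ⊆ W`. Otherwise `τ x ∉ L` for some `x ∈ K`; as
`dim L - dim (L ∩ τ*L) ≤ 1`, the vector `τ x` spans `τ*L` together with `L ∩ τ*L`, and it maps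
to zero in `(V/W) ⊗ E`, so `M` is `τ`-stable. Then `M` descends to a proper subspace of `V/W`,
and a hyperplane of `V` containing its preimage is the required `H`.
-/

open TensorProduct Module

open Polynomial in
theorem exists_algebraMap_eq_of_pow_card_eq {F E : Type*} [Field F] [Fintype F] [Field E]
    [Algebra F E] {x : E} (hx : x ^ Fintype.card F = x) : ∃ c : F, algebraMap F E c = x := by
  have hq : 1 < Fintype.card F := Fintype.one_lt_card
  have hroots : ((X ^ Fintype.card F - X : F[X]).map (algebraMap F E)).roots =
      Finset.univ.val.map (algebraMap F E) := by
    rw [← FiniteField.roots_X_pow_card_sub_X F]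
    refine (roots_map_of_injective_of_card_eq_natDegree (algebraMap F E).injective ?_).symm
    rw [FiniteField.roots_X_pow_card_sub_X, FiniteField.X_pow_card_sub_X_natDegree_eq F hq]
    rfl
  have hxroot : x ∈ ((X ^ Fintype.card F - X : F[X]).map (algebraMap F E)).roots := by
    rw [mem_roots (Polynomial.map_ne_zero (FiniteField.X_pow_card_sub_X_ne_zero F hq))]
    simp [hx]
  rw [hroots] at hxroot
  simpa using hxroot

section BaseChange

variable {R A M M' : Type*} [CommRing R] [CommRing A] [Algebra R A] [Module.Flat R A]
  [AddCommGroup M] [Module R M] [AddCommGroup M'] [Module R M']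

theorem LinearMap.ker_baseChange (f : M →ₗ[R] M') :
    LinearMap.ker (f.baseChange A) = (LinearMap.ker f).baseChange A :=
  Module.Flat.ker_lTensor_eq A A f

theorem Submodule.ker_baseChange_mkQ_s14 (p : Submodule R M) :
    LinearMap.ker (p.mkQ.baseChange A) = p.baseChange A := by
  rw [LinearMap.ker_baseChange, Submodule.ker_mkQ]

theorem Submodule.baseChange_comap (f : M →ₗ[R] M') (q : Submodule R M') :
    (q.comap f).baseChange A = (q.baseChange A).comap (f.baseChange A) := by
  have h := LinearMap.ker_baseChange (A := A) (q.mkQ ∘ₗ f)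
  rw [LinearMap.ker_comp, Submodule.ker_mkQ, LinearMap.baseChange_comp, LinearMap.ker_comp,
    Submodule.ker_baseChange_mkQ_s14] at h
  exact h.symm

end BaseChange

section FrobeniusTwist

open LinearMap Submodule Set

variable {F E V V' : Type*} [Field F] [Field E] [Algebra F E]
  [AddCommGroup V] [Module F V] [AddCommGroup V'] [Module F V'] {σ : E →ₗ[F] E}

theorem rTensor_baseChange_comm (f : V →ₗ[F] V') (x : E ⊗[F] V) :
    rTensor V' σ (f.baseChange E x) = f.baseChange E (rTensor V σ x) := by
  induction x using TensorProduct.induction_on <;> simp_all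

theorem rTensor_mem_map_baseChange (f : V →ₗ[F] V') {U : Submodule E (E ⊗[F] V)}
    (hU : ∀ x ∈ U, rTensor V σ x ∈ U) {x : E ⊗[F] V'} (hx : x ∈ U.map (f.baseChange E)) :
    rTensor V' σ x ∈ U.map (f.baseChange E) := by
  obtain ⟨u, hu, rfl⟩ := hx
  exact ⟨_, hU u hu, (rTensor_baseChange_comm f u).symm⟩

theorem rTensor_mem_ker_baseChange (f : V →ₗ[F] V') {x : E ⊗[F] V}
    (hx : x ∈ ker (f.baseChange E)) : rTensor V σ x ∈ ker (f.baseChange E) := by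
  simp_all [← rTensor_baseChange_comm]

theorem baseChange_repr_rTensor {ι : Type*} (b : Basis ι F V) (x : E ⊗[F] V) (i : ι) :
    (b.baseChange E).repr (rTensor V σ x) i = σ ((b.baseChange E).repr x i) := by
  induction x using TensorProduct.induction_on <;> simp_all

theorem rTensor_smul_of_map_mul (hσ : ∀ a b, σ (a * b) = σ a * σ b) (e : E) (x : E ⊗[F] V) :
    rTensor V σ (e • x) = σ e • rTensor V σ x := by
  induction x using TensorProduct.induction_on with
  | zero => simp
  | tmul a v => simp [smul_tmul', hσ]
  | add x y hx hy => simp [smul_add, hx, hy]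

theorem rTensor_mem_span_image (hσ : ∀ a b, σ (a * b) = σ a * σ b) {s : Set (E ⊗[F] V)}
    {x : E ⊗[F] V} (hx : x ∈ span E s) : rTensor V σ x ∈ span E (rTensor V σ '' s) := by
  induction hx using Submodule.span_induction with
  | mem y hy => exact subset_span (mem_image_of_mem _ hy)
  | zero => simp
  | add y z _ _ hy hz => rw [map_add]; exact add_mem hy hz
  | smul e y _ hy => rw [rTensor_smul_of_map_mul hσ]; exact smul_mem _ _ hy

theorem finrank_span_image_rTensor_le (hσ : ∀ a b, σ (a * b) = σ a * σ b)
    (L : Submodule E (E ⊗[F] V)) [FiniteDimensional E L] :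
    finrank E (span E (rTensor V σ '' L)) ≤ finrank E L := by
  have : Module.Free E L := Module.Free.of_divisionRing E L
  set b := Module.finBasis E L
  have hL : span E (range (L.subtype ∘ b)) = L := by
    rw [range_comp, ← Submodule.map_span, b.span_eq, Submodule.map_subtype_top]
  have hspan : span E (rTensor V σ '' L) = span E (range (rTensor V σ ∘ L.subtype ∘ b)) := by
    refine le_antisymm ?_ (span_mono ?_)
    · rw [span_le, range_comp]
      rintro - ⟨x, hx, rfl⟩
      rw [← hL] at hx
      exact rTensor_mem_span_image hσ hx
    · rintro - ⟨i, rfl⟩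
      exact mem_image_of_mem _ (b i).2
  rw [hspan]
  exact (finrank_range_le_card _).trans_eq (Fintype.card_fin _)

variable [Fintype F]

theorem exists_one_tmul_eq_of_rTensor_eq (hσ : ∀ x : E, σ x = x ^ Fintype.card F)
    {x : E ⊗[F] V} (hx : rTensor V σ x = x) : ∃ v : V, 1 ⊗ₜ v = x := by
  classical
  let b := Basis.ofVectorSpace F V
  set c := (b.baseChange E).repr x
  have hfix (i) : c i ^ Fintype.card F = c i := by
    rw [← hσ, ← baseChange_repr_rTensor, hx]
  choose a ha using fun i ↦ exists_algebraMap_eq_of_pow_card_eq (hfix i)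
  refine ⟨∑ i ∈ c.support, a i • b i, ?_⟩
  conv_rhs => rw [← (b.baseChange E).linearCombination_repr x]
  simp only [Finsupp.linearCombination_apply, Finsupp.sum, tmul_sum, tmul_smul,
    Basis.baseChange_apply]
  exact Finset.sum_congr rfl fun i _ ↦ by rw [← ha i, algebraMap_smul]

theorem exists_one_tmul_mem_of_rTensor_mem (hσ : ∀ x : E, σ x = x ^ Fintype.card F)
    {U : Submodule E (E ⊗[F] V)} (hU : ∀ x ∈ U, rTensor V σ x ∈ U) (hne : U ≠ ⊥) :
    ∃ v : V, v ≠ 0 ∧ 1 ⊗ₜ v ∈ U := by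
  classical
  let bE := (Basis.ofVectorSpace F V).baseChange E
  have hτ (x : E ⊗[F] V) (j) : bE.repr (rTensor V σ x) j = σ (bE.repr x j) :=
    baseChange_repr_rTensor _ x j
  obtain ⟨u, hu, hu0⟩ := U.exists_mem_ne_zero_of_ne_bot hne
  induction hk : (bE.repr u).support.card using Nat.strong_induction_on generalizing u with
  | _ k ih =>
    subst hk
    obtain ⟨i, hi⟩ : (bE.repr u).support.Nonempty := by simpa using hu0
    set u₁ := (bE.repr u i)⁻¹ • u
    have hu₁ : u₁ ∈ U := U.smul_mem _ hu
    have hu₁i : bE.repr u₁ i = 1 := by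
      simp [u₁, inv_mul_cancel₀ (Finsupp.mem_support_iff.1 hi)]
    by_cases hfix : rTensor V σ u₁ = u₁
    · obtain ⟨v, hv⟩ := exists_one_tmul_eq_of_rTensor_eq hσ hfix
      refine ⟨v, ?_, hv ▸ hu₁⟩
      rintro rfl
      simp [← hv] at hu₁i
    -- the `i`-th coordinate of `τ u₁ - u₁` is `1 ^ q - 1 = 0`, so its support is smaller
    refine ih _ ?_ (rTensor V σ u₁ - u₁) (U.sub_mem (hU _ hu₁) hu₁) (sub_ne_zero.2 hfix) rfl
    refine Finset.card_lt_card ((Finset.ssubset_iff_of_subset ?_).2 ⟨i, hi, ?_⟩)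
    · intro j hj
      contrapose! hj
      simp [u₁, hτ, Finsupp.notMem_support_iff.1 hj]
    · simp [hτ, hu₁i, hσ]

theorem exists_baseChange_eq_of_rTensor_mem (hσ : ∀ x : E, σ x = x ^ Fintype.card F)
    {U : Submodule E (E ⊗[F] V)} (hU : ∀ x ∈ U, rTensor V σ x ∈ U) :
    ∃ U₀ : Submodule F V, U₀.baseChange E = U := by
  set U₀ := (U.restrictScalars F).comap (TensorProduct.mk F E V 1)
  have hle : U₀.baseChange E ≤ U := by
    rw [baseChange_eq_span, span_le]
    rintro - ⟨v, hv, rfl⟩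
    exact hv
  refine ⟨U₀, le_antisymm hle ?_⟩
  rw [← U₀.ker_baseChange_mkQ_s14, le_ker_iff_map]
  by_contra hne
  obtain ⟨w, hw0, u, hu, hpu⟩ :=
    exists_one_tmul_mem_of_rTensor_mem hσ (fun _ ↦ rTensor_mem_map_baseChange U₀.mkQ hU) hne
  obtain ⟨v, rfl⟩ := U₀.mkQ_surjective w
  have hdiff : 1 ⊗ₜ v - u ∈ U₀.baseChange E := by
    rw [← U₀.ker_baseChange_mkQ_s14, mem_ker, map_sub, hpu]
    simp
  have hv : v ∈ U₀ := by
    simpa [U₀] using U.add_mem (hle hdiff) hu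
  exact hw0 ((Submodule.Quotient.mk_eq_zero _).2 hv)

end FrobeniusTwist

theorem Submodule.span_image_one_tmul {F E V : Type*} [CommRing F] [CommRing E] [Algebra F E]
    [AddCommGroup V] [Module F V] (p : Submodule F V) :
    span E ((fun v ↦ (1 : E) ⊗ₜ[F] v) '' (p : Set V)) = p.baseChange E := by
  rw [baseChange_eq_span, map_coe]
  rfl

theorem inf_ker_ne_bot_and_map_ne_top {K V₁ V₂ : Type*} [Field K] [AddCommGroup V₁]
    [Module K V₁] [AddCommGroup V₂] [Module K V₂] [FiniteDimensional K V₂] (f : V₁ →ₗ[K] V₂)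
    {L : Submodule K V₁} [FiniteDimensional K L] (hL : finrank K L = finrank K V₂)
    (hf : ¬ Function.Bijective (f ∘ₗ L.subtype)) : L ⊓ LinearMap.ker f ≠ ⊥ ∧ L.map f ≠ ⊤ := by
  have hinj :=
    LinearMap.injective_iff_surjective_of_finrank_eq_finrank hL (f := f ∘ₗ L.subtype)
  have hsurj : ¬ Function.Surjective (f ∘ₗ L.subtype) := fun h ↦ hf ⟨hinj.2 h, h⟩
  refine ⟨?_, ?_⟩
  · rw [Ne, ← disjoint_iff, Submodule.disjoint_iff_comap_eq_bot, ← LinearMap.ker_comp,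
      LinearMap.ker_eq_bot]
    exact fun h ↦ hsurj (hinj.1 h)
  · rwa [← LinearMap.range_eq_top, LinearMap.range_comp, Submodule.range_subtype] at hsurj

section ToyShtuka

open LinearMap Submodule Set

variable {F E V V' : Type*} [Field F] [Field E] [Algebra F E]
  [AddCommGroup V] [Module F V] [AddCommGroup V'] [Module F V'] {σ : E →ₗ[F] E}

theorem rTensor_mem_inf_ker_or_rTensor_mem_map [FiniteDimensional F V]
    (hσ : ∀ a b, σ (a * b) = σ a * σ b) (f : V →ₗ[F] V') (L : Submodule E (E ⊗[F] V))
    (hL : finrank E L - finrank E ↥(L ⊓ span E (rTensor V σ '' L)) ≤ 1) :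
    (∀ x ∈ L ⊓ ker (f.baseChange E), rTensor V σ x ∈ L ⊓ ker (f.baseChange E)) ∨
      ∀ x ∈ L.map (f.baseChange E), rTensor V' σ x ∈ L.map (f.baseChange E) := by
  set p := f.baseChange E
  set T := span E (rTensor V σ '' L)
  by_cases hK : ∀ x ∈ L ⊓ ker p, rTensor V σ x ∈ L
  · exact Or.inl fun x hx ↦ ⟨hK x hx, rTensor_mem_ker_baseChange f hx.2⟩
  right
  push Not at hK
  obtain ⟨x, ⟨hxL, hxp⟩, hτx⟩ := hK
  have hT : (L ⊓ T) ⊔ span E {rTensor V σ x} = T := by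
    have hτxT : rTensor V σ x ∈ T := subset_span (mem_image_of_mem _ hxL)
    refine eq_of_le_of_finrank_le (sup_le inf_le_right ((span_singleton_le_iff_mem _ _).2 hτxT)) ?_
    have hlt : L ⊓ T < (L ⊓ T) ⊔ span E {rTensor V σ x} :=
      left_lt_sup.2 fun h ↦ hτx (h (mem_span_singleton_self _)).1
    have := Submodule.finrank_lt_finrank_of_lt hlt
    have : finrank E T ≤ finrank E L := finrank_span_image_rTensor_le hσ L
    have := Submodule.finrank_mono (inf_le_left : L ⊓ T ≤ L)
    omega
  have hpτx : p (rTensor V σ x) = 0 := rTensor_mem_ker_baseChange f hxp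
  rintro - ⟨u, hu, rfl⟩
  have hτu : rTensor V σ u ∈ (L ⊓ T) ⊔ span E {rTensor V σ x} :=
    hT.symm ▸ subset_span (mem_image_of_mem _ hu)
  obtain ⟨a, ha, b, hb, hab⟩ := mem_sup.1 hτu
  obtain ⟨e, rfl⟩ := mem_span_singleton.1 hb
  refine ⟨a, ha.1, ?_⟩
  rw [rTensor_baseChange_comm, ← hab, map_add, map_smul, hpτx, smul_zero, add_zero]

variable [Fintype F]

theorem exists_line_of_rTensor_mem_inf (hσ : ∀ x : E, σ x = x ^ Fintype.card F)
    (W : Submodule F V) (L : Submodule E (E ⊗[F] V)) (hK : L ⊓ W.baseChange E ≠ ⊥)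
    (hτ : ∀ x ∈ L ⊓ W.baseChange E, rTensor V σ x ∈ L ⊓ W.baseChange E) :
    ∃ J : Submodule F V, finrank F J = 1 ∧ J ≤ W ∧ J.baseChange E ≤ L := by
  obtain ⟨K₀, hK₀⟩ := exists_baseChange_eq_of_rTensor_mem hσ hτ
  obtain ⟨v, hv, hv0⟩ := K₀.exists_mem_ne_zero_of_ne_bot (by rintro rfl; simp [← hK₀] at hK)
  have hK₀W : K₀ ≤ W := (baseChange_le_iff (A := E)).1 (hK₀ ▸ inf_le_right)
  refine ⟨span F {v}, finrank_span_singleton hv0, (span_singleton_le_iff_mem _ _).2 (hK₀W hv),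
    (baseChange_mono E ((span_singleton_le_iff_mem _ _).2 hv)).trans (hK₀ ▸ inf_le_left)⟩

theorem exists_hyperplane_of_rTensor_mem_map [FiniteDimensional F V]
    (hσ : ∀ x : E, σ x = x ^ Fintype.card F) (W : Submodule F V) (L : Submodule E (E ⊗[F] V))
    (hM : L.map (W.mkQ.baseChange E) ≠ ⊤)
    (hτ : ∀ x ∈ L.map (W.mkQ.baseChange E),
      rTensor (V ⧸ W) σ x ∈ L.map (W.mkQ.baseChange E)) :
    ∃ H : Submodule F V, finrank F H + 1 = finrank F V ∧ W ≤ H ∧ L ≤ H.baseChange E := by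
  obtain ⟨M₀, hM₀⟩ := exists_baseChange_eq_of_rTensor_mem hσ hτ
  have hlt : M₀.comap W.mkQ < ⊤ := by
    refine lt_top_iff_ne_top.2 fun h ↦ hM ?_
    have : M₀ = ⊤ := by
      rw [← map_comap_eq_of_surjective W.mkQ_surjective M₀, h, Submodule.map_top, range_mkQ]
    rw [← hM₀, this, baseChange_top]
  obtain ⟨g, hg0, hle⟩ := (M₀.comap W.mkQ).exists_le_ker_of_lt_top hlt
  refine ⟨ker g, Module.Dual.finrank_ker_add_one_of_ne_zero hg0, ?_, ?_⟩
  · exact (W.ker_mkQ ▸ ker_le_comap W.mkQ).trans hle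
  · calc L ≤ (L.map (W.mkQ.baseChange E)).comap (W.mkQ.baseChange E) := le_comap_map _ _
      _ = (M₀.comap W.mkQ).baseChange E := by rw [← hM₀, baseChange_comap]
      _ ≤ (ker g).baseChange E := baseChange_mono E hle

end ToyShtuka

theorem schubert_divisor_description_general
    {F E : Type*} [Field F] [Fintype F] [Field E] [Algebra F E]
    {V : Type*} [AddCommGroup V] [Module F V] [FiniteDimensional F V]
    (N n : ℕ) (hNV : finrank F V = N)
    (σ : E →ₗ[F] E) (hσ : ∀ x : E, σ x = x ^ Fintype.card F)
    (W : Submodule F V) (hW : finrank F ↥W = N - n)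
    (L : Submodule E (E ⊗[F] V)) (hLn : finrank E ↥L = n)
    (hL : finrank E ↥L -
        finrank E ↥(L ⊓ Submodule.span E
          (⇑(LinearMap.rTensor V σ) '' (L : Set (E ⊗[F] V)))) ≤ 1)
    (hniso : ¬ Function.Bijective ⇑(((W.mkQ).baseChange E).comp L.subtype)) :
    (∃ H : Submodule F V, finrank F ↥H = N - 1 ∧ W ≤ H ∧
        L ≤ Submodule.span E ((fun v => (1 : E) ⊗ₜ[F] v) '' (H : Set V))) ∨
    (∃ J : Submodule F V, finrank F ↥J = 1 ∧ J ≤ W ∧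
        Submodule.span E ((fun v => (1 : E) ⊗ₜ[F] v) '' (J : Set V)) ≤ L) := by
  have hdim : finrank E L = finrank E (E ⊗[F] (V ⧸ W)) := by
    have hLV := L.finrank_le
    have hWV := W.finrank_quotient_add_finrank
    rw [finrank_baseChange] at hLV ⊢
    omega
  obtain ⟨hK, hM⟩ := inf_ker_ne_bot_and_map_ne_top _ hdim hniso
  have hmul (a b : E) : σ (a * b) = σ a * σ b := by simp [hσ, mul_pow]
  simp only [Submodule.span_image_one_tmul]
  rcases rTensor_mem_inf_ker_or_rTensor_mem_map hmul W.mkQ L hL with hKτ | hMτ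
  · rw [W.ker_baseChange_mkQ_s14] at hK hKτ
    exact Or.inr (exists_line_of_rTensor_mem_inf hσ W L hK hKτ)
  · obtain ⟨H, hH, hWH, hLH⟩ := exists_hyperplane_of_rTensor_mem_map hσ W L hM hMτ
    exact Or.inl ⟨H, by omega, hWH, hLH⟩

/-- Set-theoretic description of Schubert divisors: if a nontrivial `n`-dimensional toy
shtuka `L` fails to map isomorphically to `(V/W) ⊗ E` for a codimension-`n` subspace
`W ⊆ V`, then `L ⊆ H ⊗ E` for a hyperplane `H ⊇ W` or `J ⊗ E ⊆ L` for a line `J ⊆ W`. -/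
theorem schubert_divisor_description
    {F E : Type*} [Field F] [Fintype F] [Field E] [Algebra F E]
    {V : Type*} [AddCommGroup V] [Module F V] [FiniteDimensional F V]
    (N n : ℕ) (hNV : finrank F V = N) (hN : 3 ≤ N) (hn1 : 1 ≤ n) (hnN : n ≤ N - 1)
    (σ : E →ₗ[F] E) (hσ : ∀ x : E, σ x = x ^ Fintype.card F)
    (W : Submodule F V) (hW : finrank F ↥W = N - n)
    (L : Submodule E (E ⊗[F] V)) (hLn : finrank E ↥L = n)
    (hL : finrank E ↥L -
        finrank E ↥(L ⊓ Submodule.span E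
          (⇑(LinearMap.rTensor V σ) '' (L : Set (E ⊗[F] V)))) ≤ 1)
    (hnt : Submodule.span E (⇑(LinearMap.rTensor V σ) '' (L : Set (E ⊗[F] V))) ≠ L)
    (hniso : ¬ Function.Bijective ⇑(((W.mkQ).baseChange E).comp L.subtype)) :
    (∃ H : Submodule F V, finrank F ↥H = N - 1 ∧ W ≤ H ∧
        L ≤ Submodule.span E ((fun v => (1 : E) ⊗ₜ[F] v) '' (H : Set V))) ∨
    (∃ J : Submodule F V, finrank F ↥J = 1 ∧ J ≤ W ∧
        Submodule.span E ((fun v => (1 : E) ⊗ₜ[F] v) '' (J : Set V)) ≤ L) :=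
  schubert_divisor_description_general N n hNV σ hσ W hW L hLn hL hniso
end
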